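/- arXiv:2408.12186 — 3 statements merged into one kernel-verified Lean document; each statement's English description precedes it below -/
import Mathlib

section
/- Let (β_j)_{j≥1} be real coefficients with E[β_j] = 0, coefficients independent, and E[β_{k,ℓ}²] ≲ 2^{-k(2α+d)} k^{-2} for all wavelet indices at resolution k. Let the aggregated coefficient at resolution K be β̄_{K,ℓ'} = Σ_{k=0}^K Σ_{ℓ ∈ I_k^d} γ_{k,K,ℓ,ℓ'} β_{k,ℓ}, where the refinement weights satisfy γ ≥ 0 and Σ_{ℓ∈I_k^d} γ_{k,K,ℓ,ℓ'} ≤ 2^{(k-K)d/2}. Then E[β̄_{K,ℓ'}²] ≲ 2^{-Kd}, and hence Σ_{ℓ'∈I_K^d} E[β̄_{K,ℓ'}²] is bounded uniformly in K (since |I_K^d| ≍ 2^{Kd}). -/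
open MeasureTheory ProbabilityTheory

/-- The index set `I_k^d = ∏ᵢ {-m, …, 2^k}`. -/
noncomputable def splineIndex (m d k : ℕ) : Finset (Fin d → ℤ) :=
  Fintype.piFinset fun _ => Finset.Icc (-(m : ℤ)) (2 ^ k)

/-- if the independent mean-zero wavelet coefficients satisfy
`E[β_{k,ℓ}²] ≲ 2^{-k(2α+d)} (1+k)^{-2}` and the refinement weights are nonnegative with
`∑_{ℓ∈I_k^d} γ_{k,ℓ,ℓ'} ≤ 2^{(k-K)d/2}`, then the aggregated coefficients
`β̄_{K,ℓ'} = ∑_{k≤K} ∑_ℓ γ_{k,ℓ,ℓ'} β_{k,ℓ}` satisfy `E[β̄_{K,ℓ'}²] ≲ 2^{-Kd}`, and hence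
`∑_{ℓ'∈I_K^d} E[β̄_{K,ℓ'}²]` is bounded uniformly in `K`. -/
theorem aggregated_coefficient_variance_bound
    {Ω : Type*} [MeasureSpace Ω] (μ : Measure Ω) [IsProbabilityMeasure μ]
    (m d : ℕ) (hd : 0 < d) (α : ℝ) (hα : 0 < α)
    (β : ℕ → (Fin d → ℤ) → Ω → ℝ)
    (hmeas : ∀ k ℓ, Measurable (β k ℓ))
    (hL2 : ∀ k ℓ, MemLp (β k ℓ) 2 μ)
    (hindep : iIndepFun
      (fun p : (_ : ℕ) × (Fin d → ℤ) => β p.1 p.2) μ)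
    (hmean : ∀ k ℓ, ∫ ω, β k ℓ ω ∂μ = 0)
    (C : ℝ) (hC : 0 < C)
    (hvar : ∀ k ℓ, ∫ ω, (β k ℓ ω) ^ 2 ∂μ ≤
      C * (2 : ℝ) ^ (-((k : ℝ) * (2 * α + d))) * ((1 : ℝ) + k)⁻¹ ^ 2)
    (γ : ℕ → ℕ → (Fin d → ℤ) → (Fin d → ℤ) → ℝ)
    (hγpos : ∀ k K ℓ ℓ', 0 ≤ γ k K ℓ ℓ')
    (hγsum : ∀ k K ℓ', k ≤ K →
      ∑ ℓ ∈ splineIndex m d k, γ k K ℓ ℓ' ≤ (2 : ℝ) ^ (((k : ℝ) - K) * d / 2)) :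
    ∃ C' > (0 : ℝ), ∀ K : ℕ,
      (∀ ℓ' : Fin d → ℤ,
        ∫ ω, (∑ k ∈ Finset.range (K + 1),
            ∑ ℓ ∈ splineIndex m d k, γ k K ℓ ℓ' * β k ℓ ω) ^ 2 ∂μ ≤
          C' * (2 : ℝ) ^ (-((K : ℝ) * d))) ∧
      ∑ ℓ' ∈ splineIndex m d K,
          ∫ ω, (∑ k ∈ Finset.range (K + 1),
              ∑ ℓ ∈ splineIndex m d k, γ k K ℓ ℓ' * β k ℓ ω) ^ 2 ∂μ ≤ C' := by
  classical
  set r : ℝ := (2 : ℝ) ^ (-(2 * α)) with hr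
  have hr0 : 0 ≤ r := Real.rpow_nonneg (by norm_num) _
  have hr1 : r < 1 := Real.rpow_lt_one_of_one_lt_of_neg one_lt_two (by linarith)
  set C₁ : ℝ := C * (1 - r)⁻¹ with hC₁
  have hC₁pos : 0 < C₁ := mul_pos hC (inv_pos.2 (by linarith))
  -- the key pointwise bound
  have key : ∀ (K : ℕ) (ℓ' : Fin d → ℤ),
      ∫ ω, (∑ k ∈ Finset.range (K + 1),
          ∑ ℓ ∈ splineIndex m d k, γ k K ℓ ℓ' * β k ℓ ω) ^ 2 ∂μ ≤
        C₁ * (2 : ℝ) ^ (-((K : ℝ) * d)) := by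
    intro K ℓ'
    set s : Finset ((_ : ℕ) × (Fin d → ℤ)) :=
      (Finset.range (K + 1)).sigma fun k => splineIndex m d k with hsdef
    set Y : ((_ : ℕ) × (Fin d → ℤ)) → Ω → ℝ :=
      fun p ω => γ p.1 K p.2 ℓ' * β p.1 p.2 ω with hYdef
    have hYL2 : ∀ p ∈ s, MemLp (Y p) 2 μ := fun p _ => (hL2 p.1 p.2).const_mul _
    have hsum_eq : ∀ ω, (∑ k ∈ Finset.range (K + 1),
        ∑ ℓ ∈ splineIndex m d k, γ k K ℓ ℓ' * β k ℓ ω) = ∑ p ∈ s, Y p ω := by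
      intro ω
      rw [hsdef, Finset.sum_sigma]
    have hYmean : ∀ p : (_ : ℕ) × (Fin d → ℤ), ∫ ω, Y p ω ∂μ = 0 := by
      intro p
      simp only [hYdef]
      rw [integral_const_mul, hmean]; ring
    have hpair : Set.Pairwise ↑s fun p q => IndepFun (Y p) (Y q) μ := by
      intro p _ q _ hpq
      exact (hindep.indepFun hpq).comp
        (measurable_const_mul (γ p.1 K p.2 ℓ')) (measurable_const_mul (γ q.1 K q.2 ℓ'))
    have hvarsum : variance (∑ p ∈ s, Y p) μ = ∑ p ∈ s, variance (Y p) μ :=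
      IndepFun.variance_sum hYL2 hpair
    have hEsum : ∫ ω, (∑ p ∈ s, Y p ω) ∂μ = 0 := by
      rw [integral_finset_sum s fun p hp => (hYL2 p hp).integrable one_le_two]
      simp [hYmean]
    have hI : ∫ ω, (∑ p ∈ s, Y p ω) ^ 2 ∂μ = ∑ p ∈ s, variance (Y p) μ := by
      have h2 := variance_eq_sub (μ := μ) (memLp_finset_sum' s hYL2)
      have h3 : ∫ ω, ((∑ p ∈ s, Y p) ^ 2) ω ∂μ = ∫ ω, (∑ p ∈ s, Y p ω) ^ 2 ∂μ := by
        apply integral_congr_ae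
        filter_upwards with ω
        simp [Finset.sum_apply]
      have h4 : ∫ ω, (∑ p ∈ s, Y p) ω ∂μ = 0 := by
        rw [← hEsum]
        apply integral_congr_ae
        filter_upwards with ω
        simp [Finset.sum_apply]
      rw [h3, h4] at h2
      rw [← hvarsum, h2]
      ring
    have hvarY : ∀ p : (_ : ℕ) × (Fin d → ℤ),
        variance (Y p) μ = (γ p.1 K p.2 ℓ') ^ 2 * ∫ ω, (β p.1 p.2 ω) ^ 2 ∂μ := by
      intro p
      have : variance (Y p) μ = (γ p.1 K p.2 ℓ') ^ 2 * variance (β p.1 p.2) μ :=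
        variance_const_mul _ _ _
      rw [this]
      congr 1
      rw [variance_eq_sub (hL2 p.1 p.2), hmean]
      simp [Pi.pow_apply]
    -- rewrite the target integral
    have hIeq : ∫ ω, (∑ k ∈ Finset.range (K + 1),
        ∑ ℓ ∈ splineIndex m d k, γ k K ℓ ℓ' * β k ℓ ω) ^ 2 ∂μ =
        ∑ k ∈ Finset.range (K + 1), ∑ ℓ ∈ splineIndex m d k,
          (γ k K ℓ ℓ') ^ 2 * ∫ ω, (β k ℓ ω) ^ 2 ∂μ := by
      calc ∫ ω, (∑ k ∈ Finset.range (K + 1),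
            ∑ ℓ ∈ splineIndex m d k, γ k K ℓ ℓ' * β k ℓ ω) ^ 2 ∂μ
          = ∫ ω, (∑ p ∈ s, Y p ω) ^ 2 ∂μ := by
            apply integral_congr_ae; filter_upwards with ω; rw [hsum_eq]
        _ = ∑ p ∈ s, variance (Y p) μ := hI
        _ = ∑ p ∈ s, (γ p.1 K p.2 ℓ') ^ 2 * ∫ ω, (β p.1 p.2 ω) ^ 2 ∂μ := by
            exact Finset.sum_congr rfl fun p _ => hvarY p
        _ = _ := by rw [hsdef, Finset.sum_sigma]
    rw [hIeq]
    -- bound the inner sums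
    have hinner : ∀ k ∈ Finset.range (K + 1),
        ∑ ℓ ∈ splineIndex m d k, (γ k K ℓ ℓ') ^ 2 * ∫ ω, (β k ℓ ω) ^ 2 ∂μ ≤
          C * ((2 : ℝ) ^ (-((K : ℝ) * d)) * r ^ k) := by
      intro k hk
      have hkK : k ≤ K := Nat.lt_succ_iff.mp (Finset.mem_range.mp hk)
      set V : ℝ := C * (2 : ℝ) ^ (-((k : ℝ) * (2 * α + d))) with hV
      have hVpos : 0 < V :=
        mul_pos hC (Real.rpow_pos_of_pos two_pos _)
      have h1 : ∀ ℓ ∈ splineIndex m d k,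
          (γ k K ℓ ℓ') ^ 2 * ∫ ω, (β k ℓ ω) ^ 2 ∂μ ≤ (γ k K ℓ ℓ') ^ 2 * V := by
        intro ℓ _
        apply mul_le_mul_of_nonneg_left _ (sq_nonneg _)
        calc ∫ ω, (β k ℓ ω) ^ 2 ∂μ
            ≤ C * (2 : ℝ) ^ (-((k : ℝ) * (2 * α + d))) * ((1 : ℝ) + k)⁻¹ ^ 2 := hvar k ℓ
          _ ≤ C * (2 : ℝ) ^ (-((k : ℝ) * (2 * α + d))) * 1 := by
              apply mul_le_mul_of_nonneg_left _ (le_of_lt hVpos)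
              have h5 : ((1 : ℝ) + k)⁻¹ ≤ 1 := by
                rw [inv_le_one_iff₀]; right; linarith [Nat.cast_nonneg (α := ℝ) k]
              calc ((1 : ℝ) + k)⁻¹ ^ 2 ≤ 1 ^ 2 := by
                    apply pow_le_pow_left₀ _ h5
                    positivity
                _ = 1 := one_pow 2
          _ = V := mul_one _
      have h2 : ∑ ℓ ∈ splineIndex m d k, (γ k K ℓ ℓ') ^ 2 ≤
          (2 : ℝ) ^ (((k : ℝ) - K) * d) := by
        calc ∑ ℓ ∈ splineIndex m d k, (γ k K ℓ ℓ') ^ 2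
            ≤ (∑ ℓ ∈ splineIndex m d k, γ k K ℓ ℓ') ^ 2 :=
              Finset.sum_sq_le_sq_sum_of_nonneg fun ℓ _ => hγpos k K ℓ ℓ'
          _ ≤ ((2 : ℝ) ^ (((k : ℝ) - K) * d / 2)) ^ 2 := by
              apply pow_le_pow_left₀ (Finset.sum_nonneg fun ℓ _ => hγpos k K ℓ ℓ')
                (hγsum k K ℓ' hkK)
          _ = (2 : ℝ) ^ (((k : ℝ) - K) * d) := by
              rw [sq, ← Real.rpow_add two_pos]
              ring_nf
      calc ∑ ℓ ∈ splineIndex m d k, (γ k K ℓ ℓ') ^ 2 * ∫ ω, (β k ℓ ω) ^ 2 ∂μ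
          ≤ ∑ ℓ ∈ splineIndex m d k, (γ k K ℓ ℓ') ^ 2 * V := Finset.sum_le_sum h1
        _ = (∑ ℓ ∈ splineIndex m d k, (γ k K ℓ ℓ') ^ 2) * V := by rw [Finset.sum_mul]
        _ ≤ (2 : ℝ) ^ (((k : ℝ) - K) * d) * V :=
            mul_le_mul_of_nonneg_right h2 (le_of_lt hVpos)
        _ = C * ((2 : ℝ) ^ (-((K : ℝ) * d)) * r ^ k) := by
            have he : (2 : ℝ) ^ (((k : ℝ) - K) * d) * (2 : ℝ) ^ (-((k : ℝ) * (2 * α + d))) =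
                (2 : ℝ) ^ (-((K : ℝ) * d)) * r ^ k := by
              rw [hr, ← Real.rpow_natCast ((2 : ℝ) ^ (-(2 * α))) k,
                ← Real.rpow_mul (by norm_num : (0:ℝ) ≤ 2),
                ← Real.rpow_add two_pos, ← Real.rpow_add two_pos]
              congr 1
              ring
            calc (2 : ℝ) ^ (((k : ℝ) - K) * d) * V
                = C * ((2 : ℝ) ^ (((k : ℝ) - K) * d) *
                    (2 : ℝ) ^ (-((k : ℝ) * (2 * α + d)))) := by rw [hV]; ring
              _ = C * ((2 : ℝ) ^ (-((K : ℝ) * d)) * r ^ k) := by rw [he]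
    calc ∑ k ∈ Finset.range (K + 1), ∑ ℓ ∈ splineIndex m d k,
          (γ k K ℓ ℓ') ^ 2 * ∫ ω, (β k ℓ ω) ^ 2 ∂μ
        ≤ ∑ k ∈ Finset.range (K + 1), C * ((2 : ℝ) ^ (-((K : ℝ) * d)) * r ^ k) :=
          Finset.sum_le_sum hinner
      _ = C * (2 : ℝ) ^ (-((K : ℝ) * d)) * ∑ k ∈ Finset.range (K + 1), r ^ k := by
          rw [Finset.mul_sum]; congr 1; ext k; ring
      _ ≤ C * (2 : ℝ) ^ (-((K : ℝ) * d)) * (1 - r)⁻¹ := by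
          apply mul_le_mul_of_nonneg_left _ (by positivity)
          calc ∑ k ∈ Finset.range (K + 1), r ^ k
              ≤ ∑' k : ℕ, r ^ k :=
                Summable.sum_le_tsum _ (fun i _ => pow_nonneg hr0 i)
                  (summable_geometric_of_lt_one hr0 hr1)
            _ = (1 - r)⁻¹ := tsum_geometric_of_lt_one hr0 hr1
      _ = C₁ * (2 : ℝ) ^ (-((K : ℝ) * d)) := by rw [hC₁]; ring
  -- cardinality bound
  have hcard : ∀ K : ℕ, ((splineIndex m d K).card : ℝ) ≤
      ((m : ℝ) + 2) ^ d * (2 : ℝ) ^ ((K : ℝ) * d) := by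
    intro K
    have h1 : (splineIndex m d K).card = (2 ^ K + 1 + m) ^ d := by
      rw [splineIndex, Fintype.card_piFinset, Finset.prod_const, Finset.card_univ,
        Fintype.card_fin]
      congr 1
      rw [Int.card_Icc]
      have h2 : ((2 : ℤ) ^ K + 1 - -(m : ℤ)) = ((2 ^ K + 1 + m : ℕ) : ℤ) := by
        push_cast; ring
      rw [h2, Int.toNat_natCast]
    have h3 : (1 : ℝ) ≤ (2 : ℝ) ^ K := one_le_pow₀ one_le_two
    rw [h1]
    push_cast
    calc ((2 : ℝ) ^ K + 1 + m) ^ d ≤ (((m : ℝ) + 2) * 2 ^ K) ^ d := by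
          apply pow_le_pow_left₀ (by positivity)
          nlinarith [Nat.cast_nonneg (α := ℝ) m]
      _ = ((m : ℝ) + 2) ^ d * ((2 : ℝ) ^ K) ^ d := mul_pow _ _ _
      _ = ((m : ℝ) + 2) ^ d * (2 : ℝ) ^ ((K : ℝ) * d) := by
          congr 1
          rw [← pow_mul, ← Real.rpow_natCast 2 (K * d)]
          push_cast
          ring_nf
  have hm1 : (1 : ℝ) ≤ ((m : ℝ) + 2) ^ d :=
    one_le_pow₀ (by linarith [Nat.cast_nonneg (α := ℝ) m])
  refine ⟨C₁ * ((m : ℝ) + 2) ^ d, by positivity, fun K => ⟨fun ℓ' => ?_, ?_⟩⟩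
  · calc ∫ ω, (∑ k ∈ Finset.range (K + 1),
        ∑ ℓ ∈ splineIndex m d k, γ k K ℓ ℓ' * β k ℓ ω) ^ 2 ∂μ
        ≤ C₁ * (2 : ℝ) ^ (-((K : ℝ) * d)) := key K ℓ'
      _ ≤ C₁ * ((m : ℝ) + 2) ^ d * (2 : ℝ) ^ (-((K : ℝ) * d)) := by
          apply mul_le_mul_of_nonneg_right _ (by positivity)
          nlinarith
  · calc ∑ ℓ' ∈ splineIndex m d K,
        ∫ ω, (∑ k ∈ Finset.range (K + 1),
            ∑ ℓ ∈ splineIndex m d k, γ k K ℓ ℓ' * β k ℓ ω) ^ 2 ∂μ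
        ≤ ∑ _ℓ' ∈ splineIndex m d K, C₁ * (2 : ℝ) ^ (-((K : ℝ) * d)) :=
          Finset.sum_le_sum fun ℓ' _ => key K ℓ'
      _ = ((splineIndex m d K).card : ℝ) * (C₁ * (2 : ℝ) ^ (-((K : ℝ) * d))) := by
          rw [Finset.sum_const, nsmul_eq_mul]
      _ ≤ (((m : ℝ) + 2) ^ d * (2 : ℝ) ^ ((K : ℝ) * d)) *
            (C₁ * (2 : ℝ) ^ (-((K : ℝ) * d))) :=
          mul_le_mul_of_nonneg_right (hcard K) (by positivity)
      _ = C₁ * ((m : ℝ) + 2) ^ d * ((2 : ℝ) ^ ((K : ℝ) * d) * (2 : ℝ) ^ (-((K : ℝ) * d))) := by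
          ring
      _ = C₁ * ((m : ℝ) + 2) ^ d := by
          rw [← Real.rpow_add two_pos]
          simp
end

section
/- Consequently, the metric entropy of the transformer class T_N = {clip_B ∘ f̌_Θ : Θ ∈ S_N × F_N} satisfies V(T_N, ||·||_{L∞}, ε) ≲ N² log(B'_N²/ε) + V(F_N, ||·||_{L∞}, ε/(D B'_N √N)) for some constant D > 0 and all sufficiently small ε > 0. -/
open Matrix

noncomputable def matOpNorm {N : ℕ} (M : Matrix (Fin N) (Fin N) ℝ) : ℝ :=
  ‖Matrix.toEuclideanCLM (𝕜 := ℝ) M‖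

/-- The set `S_N = {Γ : 0 ⪯ Γ ⪯ C₂ I_N}`. -/
def SN (N : ℕ) (C₂ : ℝ) : Set (Matrix (Fin N) (Fin N) ℝ) :=
  {Γ | Γ.PosSemidef ∧ (C₂ • (1 : Matrix (Fin N) (Fin N) ℝ) - Γ).PosSemidef}

/-- The linear attention prediction `f̌_Θ(X, y, xq) = (1/n) ∑ₖ yₖ φ(xₖ)ᵀ Γᵀ φ(xq)`. -/
noncomputable def attnPred {X : Type*} {N n : ℕ}
    (Γ : Matrix (Fin N) (Fin N) ℝ) (φ : X → EuclideanSpace ℝ (Fin N))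
    (xs : Fin n → X) (y : Fin n → ℝ) (xq : X) : ℝ :=
  (1 / (n : ℝ)) * ∑ k, y k *
    (inner ℝ (φ (xs k)) (Matrix.toEuclideanCLM (𝕜 := ℝ) Γᵀ (φ xq)) : ℝ)

/-- Clipping to `[-B, B]`. -/
def clip (B u : ℝ) : ℝ := max (-B) (min B u)

/-!
For `Γ ∈ S_N` the quadratic form of `Γ` lies between `0` and `C₂‖x‖²`, so `‖Γ‖_op ≤ C₂` by the
Rayleigh-quotient formula for the norm of a symmetric operator. The prediction is an average of the
bilinear expressions `⟪φ(xₖ), Γᵀ φ(x_q)⟫`, hence Lipschitz in `(Γ, φ)` for the operator norm of `Γ`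
and the sup over `z` of `‖φ z‖₂`; clipping is 1-Lipschitz. A coordinatewise
`ε/(D B' √N)`-cover of the features is an `ℓ²`-cover of radius `ε/D`, and a grid of mesh
`ε/(D(N+1))` on the entries of `Γ` is an operator-norm cover of radius `ε/D` with
`(2⌈C₂ D (N+1)/ε⌉ + 1)^{N²}` points. The products of the two covers cover `T_N`, and for small `ε`
the grid has at most `(B'²/ε)^{2N²}` points.
-/

lemma abs_clip_sub_clip_le (B u v : ℝ) : |clip B u - clip B v| ≤ |u - v| := by
  unfold clip
  rw [max_comm (-B), max_comm (-B)]
  exact (abs_max_sub_max_le_abs _ _ _).trans ((abs_min_sub_min_le_max _ _ _ _).trans (by simp))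

lemma EuclideanSpace.norm_le_sqrt_card_mul {ι : Type*} [Fintype ι] {v : EuclideanSpace ℝ ι}
    {δ : ℝ} (hδ : 0 ≤ δ) (hv : ∀ i, |v i| ≤ δ) : ‖v‖ ≤ √(Fintype.card ι) * δ := by
  rw [EuclideanSpace.norm_eq, ← Real.sqrt_sq hδ, ← Real.sqrt_mul (Nat.cast_nonneg _)]
  gcongr
  calc ∑ i, ‖v i‖ ^ 2 ≤ ∑ _i : ι, δ ^ 2 := by
        gcongr with i
        rw [Real.norm_eq_abs]
        exact hv i
    _ = _ := by simp

lemma EuclideanSpace.norm_le_of_abs_apply_le_div_sqrt {ι : Type*} [Fintype ι]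
    {v : EuclideanSpace ℝ ι} {t : ℝ} (ht : 0 ≤ t) (hv : ∀ i, |v i| ≤ t / √(Fintype.card ι)) :
    ‖v‖ ≤ t := by
  refine (EuclideanSpace.norm_le_sqrt_card_mul (by positivity) hv).trans ?_
  rw [mul_div_left_comm]
  exact mul_le_of_le_one_right ht (div_self_le_one _)

lemma Matrix.abs_apply_le_norm_toEuclideanCLM {ι : Type*} [Fintype ι] [DecidableEq ι]
    (M : Matrix ι ι ℝ) (i j : ι) : |M i j| ≤ ‖toEuclideanCLM (𝕜 := ℝ) M‖ := by
  have h : toEuclideanCLM (𝕜 := ℝ) M (EuclideanSpace.single j 1) i = M i j := by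
    simp [ofLp_toEuclideanCLM]
  calc |M i j| = ‖toEuclideanCLM (𝕜 := ℝ) M (EuclideanSpace.single j 1) i‖ := by
        rw [h, Real.norm_eq_abs]
    _ ≤ ‖toEuclideanCLM (𝕜 := ℝ) M (EuclideanSpace.single j 1)‖ := PiLp.norm_apply_le _ _
    _ ≤ ‖toEuclideanCLM (𝕜 := ℝ) M‖ := by
        simpa using (toEuclideanCLM (𝕜 := ℝ) M).le_opNorm (EuclideanSpace.single j 1)

lemma Matrix.norm_toEuclideanCLM_le_card_mul {ι : Type*} [Fintype ι] [DecidableEq ι]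
    {M : Matrix ι ι ℝ} {δ : ℝ} (hδ : 0 ≤ δ) (hM : ∀ i j, |M i j| ≤ δ) :
    ‖toEuclideanCLM (𝕜 := ℝ) M‖ ≤ Fintype.card ι * δ := by
  refine ContinuousLinearMap.opNorm_le_bound _ (by positivity) fun x => ?_
  have hrow : ∀ i, |toEuclideanCLM (𝕜 := ℝ) M x i| ≤ √(Fintype.card ι) * δ * ‖x‖ := by
    intro i
    have hi : toEuclideanCLM (𝕜 := ℝ) M x i = inner ℝ x (WithLp.toLp 2 (M i)) := by
      rw [EuclideanSpace.inner_eq_star_dotProduct]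
      simp [ofLp_toEuclideanCLM, mulVec, dotProduct_comm]
    rw [hi, mul_comm _ ‖x‖]
    refine (abs_real_inner_le_norm _ _).trans ?_
    gcongr
    exact EuclideanSpace.norm_le_sqrt_card_mul hδ (hM i)
  calc ‖toEuclideanCLM (𝕜 := ℝ) M x‖ ≤ √(Fintype.card ι) * (√(Fintype.card ι) * δ * ‖x‖) :=
        EuclideanSpace.norm_le_sqrt_card_mul (by positivity) hrow
    _ = Fintype.card ι * δ * ‖x‖ := by
        rw [← mul_assoc, ← mul_assoc, Real.mul_self_sqrt (Nat.cast_nonneg _)]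

lemma abs_inner_apply_sub_inner_apply_le {E : Type*} [NormedAddCommGroup E]
    [InnerProductSpace ℝ E] {a a' c c' : E} {L L' : E →L[ℝ] E} {R C η : ℝ}
    (ha' : ‖a'‖ ≤ R) (hc : ‖c‖ ≤ R) (hL : ‖L‖ ≤ C) (hL' : ‖L'‖ ≤ C)
    (haa' : ‖a - a'‖ ≤ η) (hcc' : ‖c - c'‖ ≤ η) (hLL' : ‖L - L'‖ ≤ η) :
    |inner ℝ a (L c) - inner ℝ a' (L' c')| ≤ η * (R * (2 * C + R)) := by
  have hR : 0 ≤ R := (norm_nonneg _).trans hc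
  have hC : 0 ≤ C := (norm_nonneg _).trans hL
  have hη : 0 ≤ η := (norm_nonneg _).trans haa'
  have hsplit : inner ℝ a (L c) - inner ℝ a' (L' c') =
      inner ℝ (a - a') (L c) + inner ℝ a' ((L - L') c) + inner ℝ a' (L' (c - c')) := by
    simp only [inner_sub_left, inner_sub_right, _root_.sub_apply, map_sub]
    ring
  have h₁ : |inner ℝ (a - a') (L c)| ≤ η * (C * R) := by
    refine (abs_real_inner_le_norm _ _).trans ?_
    gcongr
    exact (L.le_opNorm c).trans (by gcongr)
  have h₂ : |inner ℝ a' ((L - L') c)| ≤ R * (η * R) := by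
    refine (abs_real_inner_le_norm _ _).trans ?_
    gcongr
    exact ((L - L').le_opNorm c).trans (by gcongr)
  have h₃ : |inner ℝ a' (L' (c - c'))| ≤ R * (C * η) := by
    refine (abs_real_inner_le_norm _ _).trans ?_
    gcongr
    exact (L'.le_opNorm _).trans (by gcongr)
  rw [hsplit]
  refine (abs_add_three _ _ _).trans ?_
  linarith

lemma abs_one_div_mul_sum_le {n : ℕ} (hn : 0 < n) {f : Fin n → ℝ} {E : ℝ}
    (hf : ∀ k, |f k| ≤ E) : |1 / (n : ℝ) * ∑ k, f k| ≤ E := by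
  rw [abs_mul, abs_of_pos (by positivity), one_div, inv_mul_le_iff₀ (by positivity)]
  calc |∑ k, f k| ≤ ∑ k, |f k| := Finset.abs_sum_le_sum_abs _ _
    _ ≤ ∑ _k : Fin n, E := Finset.sum_le_sum fun k _ => hf k
    _ = n * E := by simp

lemma Real.exists_finset_approx_of_abs_le {R δ : ℝ} (hδ : 0 < δ) :
    ∃ T : Finset ℝ, T.card ≤ 2 * ⌈R / δ⌉₊ + 1 ∧
      ∀ x, |x| ≤ R → ∃ t ∈ T, |x - t| ≤ δ := by
  set m := ⌈R / δ⌉₊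
  refine ⟨(Finset.Icc (-(m : ℤ)) m).image fun k : ℤ => (k : ℝ) * δ, ?_, fun x hx => ?_⟩
  · refine Finset.card_image_le.trans ?_
    rw [Int.card_Icc]
    omega
  · have hxδ : |x / δ| ≤ m := by
      rw [abs_div, abs_of_pos hδ]
      exact (div_le_div_of_nonneg_right hx hδ.le).trans (Nat.le_ceil _)
    rw [abs_le] at hxδ
    refine ⟨⌊x / δ⌋ * δ, Finset.mem_image_of_mem _ (Finset.mem_Icc.2 ⟨?_, ?_⟩), ?_⟩
    · exact Int.le_floor.2 (by push_cast; exact hxδ.1)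
    · exact Int.floor_le_iff.2 (by push_cast; linarith [hxδ.2])
    · have h₀ := Int.fract_nonneg (x / δ)
      have h₁ := Int.fract_lt_one (x / δ)
      rw [Int.fract] at h₀ h₁
      rw [abs_le]
      constructor <;> nlinarith [div_mul_cancel₀ x hδ.ne']

lemma Matrix.exists_finset_approx_of_abs_le {ι : Type*} [Fintype ι] [DecidableEq ι] {R δ : ℝ}
    (hδ : 0 < δ) :
    ∃ S : Finset (Matrix ι ι ℝ), S.card ≤ (2 * ⌈R / δ⌉₊ + 1) ^ (Fintype.card ι ^ 2) ∧
      ∀ M : Matrix ι ι ℝ, (∀ i j, |M i j| ≤ R) → ∃ M' ∈ S, ∀ i j, |M i j - M' i j| ≤ δ := by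
  obtain ⟨T, hTcard, hT⟩ := Real.exists_finset_approx_of_abs_le (R := R) hδ
  refine ⟨Fintype.piFinset fun _ => Fintype.piFinset fun _ => T, ?_, fun M hM => ?_⟩
  · change (Fintype.piFinset fun _ : ι => Fintype.piFinset fun _ : ι => T).card ≤ _
    simp only [Fintype.card_piFinset, Finset.prod_const, Finset.card_univ, ← pow_mul, ← sq]
    exact Nat.pow_le_pow_left hTcard _
  · choose t htT ht using fun i j => hT (M i j) (hM i j)
    exact ⟨t, Fintype.mem_piFinset.2 fun i => Fintype.mem_piFinset.2 (htT i), ht⟩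

lemma Real.log_natCast_le_mul_log_add_log {k a b d : ℕ} (h : k ≤ a ^ d * b) :
    Real.log k ≤ d * Real.log a + Real.log b := by
  rcases Nat.eq_zero_or_pos k with rfl | hk
  · have := Real.log_natCast_nonneg a
    have := Real.log_natCast_nonneg b
    rw [Nat.cast_zero, Real.log_zero]
    positivity
  · obtain ⟨ha, hb⟩ := CanonicallyOrderedAdd.mul_pos.1 (hk.trans_le h)
    rw [← Real.log_pow, ← Real.log_mul (by exact_mod_cast ha.ne') (by exact_mod_cast hb.ne')]
    exact Real.log_le_log (by positivity) (by exact_mod_cast h)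

lemma Real.log_two_mul_natCeil_div_add_one_le {A b ε : ℝ} (hA : 0 ≤ A) (hb : 1 ≤ b)
    (hε : 0 < ε) (hεA : ε ≤ 1 / (2 * A + 3)) :
    Real.log (2 * ⌈A / ε⌉₊ + 1) ≤ 2 * Real.log (b / ε) := by
  have hεA' : (2 * A + 3) * ε ≤ 1 := by rwa [le_div_iff₀' (by positivity)] at hεA
  have hceil : (⌈A / ε⌉₊ : ℝ) * ε ≤ A + ε := by
    have := (Nat.ceil_lt_add_one (div_nonneg hA hε.le)).le
    calc (⌈A / ε⌉₊ : ℝ) * ε ≤ (A / ε + 1) * ε := by gcongr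
      _ = A + ε := by field_simp
  have hgrid : (2 * ⌈A / ε⌉₊ + 1 : ℝ) ≤ (b / ε) ^ 2 := by
    rw [div_pow, le_div_iff₀ (by positivity)]
    nlinarith
  calc Real.log (2 * ⌈A / ε⌉₊ + 1) ≤ Real.log ((b / ε) ^ 2) :=
        Real.log_le_log (by positivity) hgrid
    _ = 2 * Real.log (b / ε) := by rw [Real.log_pow]; norm_num

lemma inner_toEuclideanCLM_apply_self_mem_Icc_of_mem_SN {N : ℕ} {C₂ : ℝ}
    {Γ : Matrix (Fin N) (Fin N) ℝ} (hΓ : Γ ∈ SN N C₂) (x : EuclideanSpace ℝ (Fin N)) :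
    inner ℝ (toEuclideanCLM (𝕜 := ℝ) Γ x) x ∈ Set.Icc 0 (C₂ * ‖x‖ ^ 2) := by
  have h₀ := hΓ.1.dotProduct_mulVec_nonneg x.ofLp
  have h₁ := hΓ.2.dotProduct_mulVec_nonneg x.ofLp
  rw [real_inner_comm, inner_toEuclideanCLM, ← real_inner_self_eq_norm_sq,
    EuclideanSpace.inner_eq_star_dotProduct]
  simp only [star_trivial, sub_mulVec, smul_mulVec, one_mulVec, dotProduct_sub,
    dotProduct_smul, smul_eq_mul] at h₀ h₁ ⊢
  exact ⟨h₀, by linarith⟩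

lemma norm_toEuclideanCLM_le_of_mem_SN {N : ℕ} {C₂ : ℝ} (hC₂ : 0 ≤ C₂)
    {Γ : Matrix (Fin N) (Fin N) ℝ} (hΓ : Γ ∈ SN N C₂) : ‖toEuclideanCLM (𝕜 := ℝ) Γ‖ ≤ C₂ := by
  have hsymm : (toEuclideanCLM (𝕜 := ℝ) Γ).IsSymmetric := by
    rw [coe_toEuclideanCLM_eq_toEuclideanLin]
    exact isSymmetric_toEuclideanLin_iff.2 hΓ.1.isHermitian
  rw [ContinuousLinearMap.norm_eq_iSup_rayleighQuotient _ hsymm]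
  refine ciSup_le fun x => ?_
  obtain ⟨hq₀, hqC⟩ := inner_toEuclideanCLM_apply_self_mem_Icc_of_mem_SN hΓ x
  rw [ContinuousLinearMap.rayleighQuotient, ContinuousLinearMap.reApplyInnerSelf_apply,
    RCLike.re_to_real, abs_div, abs_of_nonneg hq₀, abs_of_nonneg (sq_nonneg _)]
  exact div_le_of_le_mul₀ (sq_nonneg _) hC₂ hqC

lemma transpose_eq_of_mem_SN {N : ℕ} {C₂ : ℝ} {Γ : Matrix (Fin N) (Fin N) ℝ}
    (hΓ : Γ ∈ SN N C₂) : Γᵀ = Γ :=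
  (conjTranspose_eq_transpose_of_trivial Γ).symm.trans hΓ.1.isHermitian

lemma exists_finset_cover_SN {N : ℕ} {C₂ η : ℝ} (hC₂ : 0 ≤ C₂) (hη : 0 < η) :
    ∃ S : Finset (Matrix (Fin N) (Fin N) ℝ),
      S.card ≤ (2 * ⌈C₂ * (N + 1) / η⌉₊ + 1) ^ (N ^ 2) ∧
      ∀ Γ ∈ SN N C₂, ∃ Γ' ∈ S, ‖toEuclideanCLM (𝕜 := ℝ) (Γ - Γ')ᵀ‖ ≤ η := by
  -- mesh `η / (N + 1)` rather than `η / N`, which is `0` when `N = 0`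
  have hδ : 0 < η / (N + 1) := by positivity
  obtain ⟨S, hScard, hS⟩ := Matrix.exists_finset_approx_of_abs_le (ι := Fin N) (R := C₂) hδ
  refine ⟨S, by simpa [div_div_eq_mul_div] using hScard, fun Γ hΓ => ?_⟩
  obtain ⟨Γ', hΓ'S, hΓΓ'⟩ := hS Γ fun i j => (Γ.abs_apply_le_norm_toEuclideanCLM i j).trans
    (norm_toEuclideanCLM_le_of_mem_SN hC₂ hΓ)
  refine ⟨Γ', hΓ'S,
    (Matrix.norm_toEuclideanCLM_le_card_mul hδ.le fun i j => hΓΓ' j i).trans ?_⟩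
  rw [Fintype.card_fin, mul_div_assoc', div_le_iff₀ (by positivity)]
  linarith

lemma abs_attnPred_sub_attnPred_le {X : Type*} {N n : ℕ} (hn : 0 < n)
    {Γ Γ' : Matrix (Fin N) (Fin N) ℝ} {φ φ' : X → EuclideanSpace ℝ (Fin N)}
    {xs : Fin n → X} {y : Fin n → ℝ} {xq : X} {Y R C η : ℝ} (hy : ∀ k, |y k| ≤ Y)
    (hφ : ∀ z, ‖φ z‖ ≤ R) (hφ' : ∀ z, ‖φ' z‖ ≤ R)
    (hΓ : ‖toEuclideanCLM (𝕜 := ℝ) Γᵀ‖ ≤ C) (hΓ' : ‖toEuclideanCLM (𝕜 := ℝ) Γ'ᵀ‖ ≤ C)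
    (hφφ' : ∀ z, ‖φ z - φ' z‖ ≤ η)
    (hΓΓ' : ‖toEuclideanCLM (𝕜 := ℝ) Γᵀ - toEuclideanCLM (𝕜 := ℝ) Γ'ᵀ‖ ≤ η) :
    |attnPred Γ φ xs y xq - attnPred Γ' φ' xs y xq| ≤ Y * (η * (R * (2 * C + R))) := by
  simp only [attnPred, ← mul_sub, ← Finset.sum_sub_distrib]
  refine abs_one_div_mul_sum_le hn fun k => ?_
  rw [abs_mul]
  exact mul_le_mul (hy k) (abs_inner_apply_sub_inner_apply_le (hφ' _) (hφ _) hΓ hΓ' (hφφ' _)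
    (hφφ' _) hΓΓ') (abs_nonneg _) ((abs_nonneg _).trans (hy k))

lemma abs_clip_attnPred_sub_clip_attnPred_le_of_mem_SN {X : Type*} {N n : ℕ} (hn : 0 < n)
    {B Y B' C₂ η : ℝ} (hC₂ : 0 ≤ C₂) (hη : η ≤ 1) {Γ Γ' : Matrix (Fin N) (Fin N) ℝ}
    {φ φ' : X → EuclideanSpace ℝ (Fin N)} {xs : Fin n → X} {y : Fin n → ℝ} {xq : X}
    (hΓ : Γ ∈ SN N C₂) (hy : ∀ k, |y k| ≤ Y) (hφ : ∀ z, ‖φ z‖ ≤ B')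
    (hφφ' : ∀ z, ‖φ z - φ' z‖ ≤ η) (hΓΓ' : ‖toEuclideanCLM (𝕜 := ℝ) (Γ - Γ')ᵀ‖ ≤ η) :
    |clip B (attnPred Γ φ xs y xq) - clip B (attnPred Γ' φ' xs y xq)| ≤
      Y * (η * ((B' + 1) * (2 * (C₂ + 1) + (B' + 1)))) := by
  have hΓT : ‖toEuclideanCLM (𝕜 := ℝ) Γᵀ‖ ≤ C₂ := by
    rw [transpose_eq_of_mem_SN hΓ]
    exact norm_toEuclideanCLM_le_of_mem_SN hC₂ hΓ
  rw [transpose_sub, map_sub] at hΓΓ'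
  refine (abs_clip_sub_clip_le _ _ _).trans (abs_attnPred_sub_attnPred_le hn hy
    (fun z => (hφ z).trans (by linarith)) (fun z => ?_) (hΓT.trans (by linarith)) ?_ hφφ' hΓΓ')
  · linarith [norm_le_norm_add_norm_sub (φ z) (φ' z), hφ z, hφφ' z]
  · linarith [norm_le_norm_add_norm_sub (toEuclideanCLM (𝕜 := ℝ) Γᵀ)
      (toEuclideanCLM (𝕜 := ℝ) Γ'ᵀ)]

lemma exists_finset_cover_clip_attnPred {X : Type*} {N n : ℕ} (hn : 0 < n) {B Y B' C₂ η : ℝ}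
    (hC₂ : 0 ≤ C₂) (hη : 0 < η) (hη₁ : η ≤ 1) {F : Set (X → EuclideanSpace ℝ (Fin N))}
    (hF : ∀ φ ∈ F, ∀ z, ‖φ z‖ ≤ B') {G : Finset (X → EuclideanSpace ℝ (Fin N))}
    (hG : ∀ φ ∈ F, ∃ φ' ∈ G, ∀ z, ‖φ z - φ' z‖ ≤ η) :
    ∃ H : Finset ((Fin n → X) → (Fin n → ℝ) → X → ℝ),
      H.card ≤ (2 * ⌈C₂ * (N + 1) / η⌉₊ + 1) ^ (N ^ 2) * G.card ∧
      ∀ Γ ∈ SN N C₂, ∀ φ ∈ F, ∃ h ∈ H, ∀ xs y xq, (∀ k, |y k| ≤ Y) →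
        |clip B (attnPred Γ φ xs y xq) - h xs y xq| ≤
          Y * (η * ((B' + 1) * (2 * (C₂ + 1) + (B' + 1)))) := by
  classical
  obtain ⟨S, hScard, hS⟩ := exists_finset_cover_SN (N := N) hC₂ hη
  refine ⟨(S ×ˢ G).image fun p xs y xq => clip B (attnPred p.1 p.2 xs y xq),
    Finset.card_image_le.trans (Finset.card_product S G ▸ Nat.mul_le_mul_right G.card hScard),
    fun Γ hΓ φ hφ => ?_⟩
  obtain ⟨φ', hφ'G, hφφ'⟩ := hG φ hφ
  obtain ⟨Γ', hΓ'S, hΓΓ'⟩ := hS Γ hΓ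
  exact ⟨_, Finset.mem_image_of_mem _ (Finset.mem_product (p := (Γ', φ')) |>.2 ⟨hΓ'S, hφ'G⟩),
    fun xs y xq hy => abs_clip_attnPred_sub_clip_attnPred_le_of_mem_SN hn hC₂ hη₁ hΓ hy
      (hF φ hφ) hφφ' hΓΓ'⟩

theorem transformer_class_entropy_general
    (X : Type*) (N n : ℕ) (hn : 0 < n)
    (B σ B' C₂ : ℝ) (hB : 0 < B) (hσ : 0 ≤ σ) (hB' : 1 ≤ B') (hC₂ : 0 < C₂) :
    ∃ D > (0 : ℝ), ∃ c > (0 : ℝ), ∃ ε₀ > (0 : ℝ), ∀ ε : ℝ, 0 < ε → ε ≤ ε₀ →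
      ∀ (F : Set (X → EuclideanSpace ℝ (Fin N))),
        (∀ φ ∈ F, ∀ z, ‖φ z‖ ≤ B') →
        ∀ G : Finset (X → EuclideanSpace ℝ (Fin N)),
          (∀ φ ∈ F, ∃ φ' ∈ G, ∀ (z : X) (j : Fin N),
            |φ z j - φ' z j| ≤ ε / (D * B' * Real.sqrt N)) →
          ∃ H : Finset ((Fin n → X) → (Fin n → ℝ) → X → ℝ),
            (∀ Γ ∈ SN N C₂, ∀ φ ∈ F, ∃ h ∈ H,
              ∀ (xs : Fin n → X) (y : Fin n → ℝ) (xq : X), (∀ k, |y k| ≤ B + σ) →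
                |clip B (attnPred Γ φ xs y xq) - h xs y xq| ≤ ε) ∧
            Real.log H.card ≤
              c * ((N : ℝ) ^ 2 * Real.log (B' ^ 2 / ε) + Real.log G.card) := by
  set L := (B' + 1) * (2 * (C₂ + 1) + (B' + 1))
  set D := (B + σ + 1) * L
  have hD : 1 ≤ D := one_le_mul_of_one_le_of_one_le (by linarith) (by nlinarith)
  set A := C₂ * (N + 1) * D
  have hA : 0 ≤ A := by positivity
  refine ⟨D, by positivity, 2, two_pos, 1 / (2 * A + 3), by positivity,
    fun ε hε hεA F hF G hG => ?_⟩
  have hε₁ : ε ≤ 1 := hεA.trans (by rw [div_le_one (by positivity)]; linarith)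
  have hG₂ : ∀ φ ∈ F, ∃ φ' ∈ G, ∀ z, ‖φ z - φ' z‖ ≤ ε / D := by
    refine fun φ hφ => (hG φ hφ).imp fun φ' ⟨hφ'G, hφφ'⟩ => ⟨hφ'G, fun z => ?_⟩
    refine (EuclideanSpace.norm_le_of_abs_apply_le_div_sqrt (t := ε / (D * B')) (by positivity)
      fun j => by simpa [div_div] using hφφ' z j).trans ?_
    exact div_le_div_of_nonneg_left hε.le (by positivity) (le_mul_of_one_le_right (by positivity) hB')
  obtain ⟨H, hHcard, hH⟩ := exists_finset_cover_clip_attnPred (B := B) (Y := B + σ) hn hC₂.le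
    (by positivity) ((div_le_one (by positivity)).2 (hε₁.trans hD)) hF hG₂
  refine ⟨H, fun Γ hΓ φ hφ => ?_, ?_⟩
  · obtain ⟨h, hhH, hh⟩ := hH Γ hΓ φ hφ
    refine ⟨h, hhH, fun xs y xq hy => (hh xs y xq hy).trans ?_⟩
    calc (B + σ) * (ε / D * L) ≤ D * (ε / D) := by nlinarith [show 0 ≤ ε / D * L by positivity]
      _ = ε := mul_div_cancel₀ _ (by positivity)
  · have hgrid : Real.log (2 * ⌈C₂ * (N + 1) / (ε / D)⌉₊ + 1) ≤ 2 * Real.log (B' ^ 2 / ε) := by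
      rw [div_div_eq_mul_div]
      exact Real.log_two_mul_natCeil_div_add_one_le hA (one_le_pow₀ hB') hε hεA
    have hlogG := Real.log_natCast_nonneg G.card
    calc _ ≤ (N : ℝ) ^ 2 * Real.log (2 * ⌈C₂ * (N + 1) / (ε / D)⌉₊ + 1) + Real.log G.card := by
          simpa using Real.log_natCast_le_mul_log_add_log hHcard
      _ ≤ (N : ℝ) ^ 2 * (2 * Real.log (B' ^ 2 / ε)) + Real.log G.card := by gcongr
      _ ≤ _ := by nlinarith

/-- metric entropy of the transformer class: the transformer class
`T_N = {clip_B ∘ f̌_Θ : Θ ∈ S_N × F_N}` satisfies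
`V(T_N, ‖·‖_∞, ε) ≲ N² log(B'²/ε) + V(F_N, ‖·‖_∞, ε/(D B' √N))`:
given any finite `ε/(D B'√N)`-cover `G` of the feature class `F_N` (componentwise sup norm),
there is a finite set `H` of prompt-to-output maps covering `T_N` to accuracy `ε` in sup norm
over prompts with labels bounded by `B+σ`, with
`log |H| ≤ c (N² log(B'²/ε) + log |G|)`. -/
theorem transformer_class_entropy
    (X : Type*) (N n : ℕ) (hn : 0 < n) (hN : 0 < N)
    (B σ B' C₂ : ℝ) (hB : 0 < B) (hσ : 0 ≤ σ) (hB' : 1 ≤ B') (hC₂ : 0 < C₂) :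
    ∃ D > (0 : ℝ), ∃ c > (0 : ℝ), ∃ ε₀ > (0 : ℝ), ∀ ε : ℝ, 0 < ε → ε ≤ ε₀ →
      ∀ (F : Set (X → EuclideanSpace ℝ (Fin N))),
        (∀ φ ∈ F, ∀ z, ‖φ z‖ ≤ B') →
        ∀ G : Finset (X → EuclideanSpace ℝ (Fin N)),
          (∀ φ ∈ F, ∃ φ' ∈ G, ∀ (z : X) (j : Fin N),
            |φ z j - φ' z j| ≤ ε / (D * B' * Real.sqrt N)) →
          ∃ H : Finset ((Fin n → X) → (Fin n → ℝ) → X → ℝ),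
            (∀ Γ ∈ SN N C₂, ∀ φ ∈ F, ∃ h ∈ H,
              ∀ (xs : Fin n → X) (y : Fin n → ℝ) (xq : X), (∀ k, |y k| ≤ B + σ) →
                |clip B (attnPred Γ φ xs y xq) - h xs y xq| ≤ ε) ∧
            Real.log H.card ≤
              c * ((N : ℝ) ^ 2 * Real.log (B' ^ 2 / ε) + Real.log G.card) :=
  transformer_class_entropy_general X N n hn B σ B' C₂ hB hσ hB' hC₂
end

section
/- Let P_1,...,P_M be probability measures and {Q_1,...,Q_Q} any finite set of probability measures on the same space. Then (1/M)Σ_{j=1}^M D(P_j || (1/M)Σ_{j'} P_{j'}) ≤ log Q + (1/M)Σ_{j=1}^M min_{1≤k≤Q} D(P_j || Q_k), where D denotes Kullback-Leibler divergence. -/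
open MeasureTheory
open scoped ENNReal NNReal

namespace YangBarronAux
open Real


variable {Ω : Type*} [MeasurableSpace Ω] {μ ν ν₁ ν₂ : Measure Ω}

lemma sum_ac {ι : Type*} [Fintype ι] {P : ι → Measure Ω} (h : ∀ i, P i ≪ ν) :
    (∑ i, P i) ≪ ν :=
  Measure.AbsolutelyContinuous.mk fun s hs h0 => by
    rw [Measure.finset_sum_apply]
    exact Finset.sum_eq_zero fun i _ => h i h0

lemma rnDeriv_le_const [SigmaFinite ν] {c : ℝ≥0∞} (h : μ ≤ c • ν) :
    μ.rnDeriv ν ≤ᵐ[ν] fun _ => c := by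
  refine ae_le_of_forall_setLIntegral_le_of_sigmaFinite (μ.measurable_rnDeriv ν)
    fun s hs _ => ?_
  rw [setLIntegral_const]
  calc ∫⁻ x in s, μ.rnDeriv ν x ∂ν ≤ μ s := Measure.setLIntegral_rnDeriv_le s
  _ ≤ (c • ν) s := Measure.le_iff'.1 h s
  _ = c * ν s := by simp [Measure.smul_apply]

lemma log_toReal_le {x : ℝ≥0∞} {c : ℝ} (hc : 1 ≤ c) (hx : x.toReal ≤ c) :
    Real.log x.toReal ≤ Real.log c := by
  rcases lt_or_ge 0 x.toReal with hpos | hnonpos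
  · exact Real.log_le_log hpos hx
  · have : x.toReal = 0 := le_antisymm hnonpos ENNReal.toReal_nonneg
    rw [this, Real.log_zero]
    exact Real.log_nonneg hc

lemma integrable_neg_llr_part [SigmaFinite μ] [IsFiniteMeasure ν] (h : μ ≪ ν) :
    Integrable (fun x => max (-(llr μ ν x)) 0) μ := by
  refine (Measure.integrable_toReal_rnDeriv (μ := ν) (ν := μ)).mono
    ((measurable_llr μ ν).neg.max measurable_const).stronglyMeasurable.aestronglyMeasurable ?_
  filter_upwards [exp_neg_llr h] with x hx
  simp only [Real.norm_eq_abs]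
  rw [abs_of_nonneg (le_max_right _ _), abs_of_nonneg ENNReal.toReal_nonneg]
  have h1 := Real.add_one_le_exp (-(llr μ ν x))
  rw [hx] at h1
  refine max_le (by linarith) ?_
  rw [← hx]
  positivity

lemma integrable_llr_of_ae_le [SigmaFinite μ] [IsFiniteMeasure ν] (h : μ ≪ ν)
    {g : Ω → ℝ} (hg : Integrable g μ) (hle : llr μ ν ≤ᵐ[μ] g) :
    Integrable (llr μ ν) μ := by
  refine Integrable.mono ((integrable_neg_llr_part h).add hg.abs)
    (stronglyMeasurable_llr μ ν).aestronglyMeasurable ?_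
  filter_upwards [hle] with x hx
  simp only [Real.norm_eq_abs, Pi.add_apply]
  have habs : (0:ℝ) ≤ max (-(llr μ ν x)) 0 + |g x| := by positivity
  rw [abs_of_nonneg habs]
  rcases le_or_gt 0 (llr μ ν x) with h0 | h0
  · rw [abs_of_nonneg h0]
    calc llr μ ν x ≤ g x := hx
    _ ≤ |g x| := le_abs_self _
    _ ≤ _ := le_add_of_nonneg_left (by positivity)
  · rw [abs_of_neg h0]
    exact le_add_of_le_of_nonneg (le_max_left _ _) (abs_nonneg _)

lemma integral_llr_nonneg [IsProbabilityMeasure μ] [IsProbabilityMeasure ν] (h : μ ≪ ν)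
    (hint : Integrable (llr μ ν) μ) : 0 ≤ ∫ x, llr μ ν x ∂μ := by
  have hexp : Integrable (fun x => Real.exp (-(llr μ ν x))) μ :=
    (Measure.integrable_toReal_rnDeriv (μ := ν) (ν := μ)).congr (exp_neg_llr h).symm
  have h1 : ∫ x, (-(llr μ ν x) + 1) ∂μ ≤ ∫ x, Real.exp (-(llr μ ν x)) ∂μ := by
    refine integral_mono_ae (hint.neg.add (integrable_const 1)) hexp ?_
    exact Filter.Eventually.of_forall fun x => Real.add_one_le_exp _
  have h2 : ∫ x, Real.exp (-(llr μ ν x)) ∂μ = ∫ x, (ν.rnDeriv μ x).toReal ∂μ :=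
    integral_congr_ae (exp_neg_llr h)
  have h3 : ∫ x, (ν.rnDeriv μ x).toReal ∂μ ≤ 1 := by
    rw [Measure.integral_toReal_rnDeriv']
    simp only [probReal_univ]
    have : (0:ℝ) ≤ ((ν.singularPart μ) Set.univ).toReal := ENNReal.toReal_nonneg
    exact sub_le_self _ measureReal_nonneg
  have hadd := integral_add (μ := μ) (f := fun x => -(llr μ ν x)) (g := fun _ => (1:ℝ))
    hint.neg (integrable_const 1)
  simp only [integral_neg, integral_const, measure_univ, probReal_univ, smul_eq_mul,
    one_mul] at hadd
  rw [hadd] at h1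
  linarith [h1.trans (h2.trans_le h3)]

lemma llr_chain [IsFiniteMeasure μ] [SigmaFinite ν₁] [SigmaFinite ν₂]
    (h1 : μ ≪ ν₁) (h2 : ν₁ ≪ ν₂) :
    llr μ ν₂ =ᵐ[μ] fun x => llr μ ν₁ x + llr ν₁ ν₂ x := by
  have hmul : μ.rnDeriv ν₁ * ν₁.rnDeriv ν₂ =ᵐ[ν₂] μ.rnDeriv ν₂ :=
    Measure.rnDeriv_mul_rnDeriv h1
  filter_upwards [(h1.trans h2).ae_le hmul, Measure.rnDeriv_pos h1,
    h1.ae_le (Measure.rnDeriv_lt_top μ ν₁), h1.ae_le (Measure.rnDeriv_pos h2),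
    (h1.trans h2).ae_le (Measure.rnDeriv_lt_top ν₁ ν₂)]
    with x heq h1pos h1top h2pos h2top
  simp only [llr, ← heq, Pi.mul_apply, ENNReal.toReal_mul]
  rw [Real.log_mul]
  · exact ENNReal.toReal_ne_zero.2 ⟨h1pos.ne', h1top.ne⟩
  · exact ENNReal.toReal_ne_zero.2 ⟨h2pos.ne', h2top.ne⟩

lemma ofReal_sum_le {ι : Type*} (s : Finset ι) (f : ι → ℝ) :
    ENNReal.ofReal (∑ i ∈ s, f i) ≤ ∑ i ∈ s, ENNReal.ofReal (f i) := by
  classical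
  induction s using Finset.induction_on with
  | empty => simp
  | insert _ _ h ih =>
    rw [Finset.sum_insert h, Finset.sum_insert h]
    exact ENNReal.ofReal_add_le.trans (add_le_add le_rfl ih)

end YangBarronAux

open Classical in
/-- Kullback–Leibler divergence, valued in `ℝ≥0∞`: `∫ log(dμ/dν) dμ` when `μ ≪ ν` and the
log-likelihood ratio is integrable, `∞` otherwise. -/
noncomputable def klDiv {Ω : Type*} [MeasurableSpace Ω] (μ ν : Measure Ω) : ℝ≥0∞ :=
  if μ ≪ ν ∧ Integrable (fun x => Real.log (μ.rnDeriv ν x).toReal) μ then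
    ENNReal.ofReal (∫ x, Real.log (μ.rnDeriv ν x).toReal ∂μ)
  else ∞

/-- Yang–Barron bound on mutual information: for probability measures
`P 1, …, P M` and any finite family `Qs 1, …, Qs Q`,
`(1/M) ∑_j D(P j ‖ (1/M)∑ P) ≤ log Q + (1/M) ∑_j min_k D(P j ‖ Qs k)`. -/
theorem yang_barron_mutual_information_bound
    {Ω : Type*} [MeasurableSpace Ω]
    (M Q : ℕ) (hM : 0 < M) (hQ : 0 < Q)
    (P : Fin M → Measure Ω) (hP : ∀ j, IsProbabilityMeasure (P j))
    (Qs : Fin Q → Measure Ω) (hQs : ∀ k, IsProbabilityMeasure (Qs k)) :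
    (M : ℝ≥0∞)⁻¹ * ∑ j, klDiv (P j) (((M : ℝ≥0∞)⁻¹) • ∑ j', P j') ≤
      ENNReal.ofReal (Real.log Q) +
        (M : ℝ≥0∞)⁻¹ * ∑ j, ⨅ k : Fin Q, klDiv (P j) (Qs k) := by
  classical
  open YangBarronAux in
  have hM0 : (M : ℝ≥0∞) ≠ 0 := Nat.cast_ne_zero.2 hM.ne'
  have hMtop : (M : ℝ≥0∞) ≠ ∞ := ENNReal.natCast_ne_top M
  have hQ0 : (Q : ℝ≥0∞) ≠ 0 := Nat.cast_ne_zero.2 hQ.ne'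
  have hQtop : (Q : ℝ≥0∞) ≠ ∞ := ENNReal.natCast_ne_top Q
  set Pbar : Measure Ω := (M : ℝ≥0∞)⁻¹ • ∑ j', P j' with hPbar
  set Qbar : Measure Ω := (Q : ℝ≥0∞)⁻¹ • ∑ k, Qs k with hQbar
  haveI hPbarProb : IsProbabilityMeasure Pbar := by
    constructor
    have hsum : (∑ j', P j') Set.univ = M := by
      rw [Measure.finset_sum_apply]
      rw [Finset.sum_congr rfl fun j _ => (hP j).measure_univ]
      simp
    rw [hPbar, Measure.smul_apply, hsum, smul_eq_mul, ENNReal.inv_mul_cancel hM0 hMtop]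
  haveI hQbarProb : IsProbabilityMeasure Qbar := by
    constructor
    have hsum : (∑ k, Qs k) Set.univ = Q := by
      rw [Measure.finset_sum_apply]
      rw [Finset.sum_congr rfl fun k _ => (hQs k).measure_univ]
      simp
    rw [hQbar, Measure.smul_apply, hsum, smul_eq_mul, ENNReal.inv_mul_cancel hQ0 hQtop]
  -- basic domination facts
  have hPj_le_smul : ∀ j, P j ≤ (M : ℝ≥0∞) • Pbar := fun j => by
    rw [hPbar, smul_smul, ENNReal.mul_inv_cancel hM0 hMtop, one_smul]
    refine Measure.le_iff'.2 fun s => ?_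
    rw [Measure.finset_sum_apply]
    exact Finset.single_le_sum (f := fun i => P i s) (fun i _ => zero_le) (Finset.mem_univ j)
  have hQk_le_smul : ∀ k, Qs k ≤ (Q : ℝ≥0∞) • Qbar := fun k => by
    rw [hQbar, smul_smul, ENNReal.mul_inv_cancel hQ0 hQtop, one_smul]
    refine Measure.le_iff'.2 fun s => ?_
    rw [Measure.finset_sum_apply]
    exact Finset.single_le_sum (f := fun i => Qs i s) (fun i _ => zero_le) (Finset.mem_univ k)
  have hPjPbar : ∀ j, P j ≪ Pbar := fun j =>
    Measure.absolutelyContinuous_of_le_smul (hPj_le_smul j)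
  have hQkQbar : ∀ k, Qs k ≪ Qbar := fun k =>
    Measure.absolutelyContinuous_of_le_smul (hQk_le_smul k)
  -- LHS llr facts (unconditional)
  have hintA : ∀ j, Integrable (llr (P j) Pbar) (P j) := fun j => by
    haveI := hP j
    refine integrable_llr_of_ae_le (hPjPbar j) (integrable_const (Real.log M)) ?_
    filter_upwards [(hPjPbar j).ae_le (rnDeriv_le_const (hPj_le_smul j))] with x hx
    refine log_toReal_le (Nat.one_le_cast.2 hM) ?_
    exact (ENNReal.toReal_mono hMtop hx).trans_eq (by simp)
  have hA_nonneg : ∀ j, 0 ≤ ∫ x, llr (P j) Pbar x ∂(P j) := fun j => by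
    haveI := hP j
    exact integral_llr_nonneg (hPjPbar j) (hintA j)
  have hklA : ∀ j, klDiv (P j) Pbar
      = ENNReal.ofReal (∫ x, llr (P j) Pbar x ∂(P j)) := fun j => by
    rw [klDiv, if_pos ⟨hPjPbar j, hintA j⟩]
    rfl
  -- main case split on finiteness of RHS
  by_cases hfin : ∀ j, (⨅ k, klDiv (P j) (Qs k)) ≠ ∞
  swap
  · push_neg at hfin
    obtain ⟨j₀, hj₀⟩ := hfin
    have : ∑ j, ⨅ k, klDiv (P j) (Qs k) = ∞ :=
      ENNReal.sum_eq_top.2 ⟨j₀, Finset.mem_univ _, hj₀⟩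
    rw [this, ENNReal.mul_top (ENNReal.inv_ne_zero.2 hMtop)]
    simp
  -- choose optimal k for each j
  haveI : Nonempty (Fin Q) := ⟨⟨0, hQ⟩⟩
  choose κ hκ using (show ∀ j, ∃ k, klDiv (P j) (Qs k) = ⨅ k', klDiv (P j) (Qs k') from
    fun j => by
      obtain ⟨k, hk⟩ := Finite.exists_min fun k => klDiv (P j) (Qs k)
      exact ⟨k, le_antisymm (le_iInf hk) (iInf_le _ k)⟩)
  have hκfin : ∀ j, klDiv (P j) (Qs (κ j)) ≠ ∞ := fun j => (hκ j) ▸ hfin j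
  have hcond : ∀ j, (P j ≪ Qs (κ j)) ∧ Integrable (llr (P j) (Qs (κ j))) (P j) := fun j => by
    by_contra hc
    exact hκfin j (by rw [klDiv, if_neg (by exact hc)])
  have hklK : ∀ j, klDiv (P j) (Qs (κ j))
      = ENNReal.ofReal (∫ x, llr (P j) (Qs (κ j)) x ∂(P j)) := fun j => by
    rw [klDiv, if_pos ⟨(hcond j).1, (hcond j).2⟩]
    rfl
  have hPjQbar : ∀ j, P j ≪ Qbar := fun j => (hcond j).1.trans (hQkQbar (κ j))
  have hPbarQbarAC : Pbar ≪ Qbar := by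
    rw [hPbar]
    exact (Measure.absolutelyContinuous_of_le_smul le_rfl).trans (sum_ac hPjQbar)
  -- Step B: llr against Qbar vs best Qs k
  have hB_le : ∀ j, llr (P j) Qbar ≤ᵐ[P j]
      fun x => llr (P j) (Qs (κ j)) x + Real.log Q := fun j => by
    haveI := hP j; haveI := hQs (κ j)
    filter_upwards [llr_chain (hcond j).1 (hQkQbar (κ j)),
      (hPjQbar j).ae_le (rnDeriv_le_const (hQk_le_smul (κ j)))] with x hx hx2
    rw [hx]
    have hlog : llr (Qs (κ j)) Qbar x ≤ Real.log Q :=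
      log_toReal_le (Nat.one_le_cast.2 hQ) ((ENNReal.toReal_mono hQtop hx2).trans_eq (by simp))
    linarith
  have hintB : ∀ j, Integrable (llr (P j) Qbar) (P j) := fun j => by
    haveI := hP j
    exact integrable_llr_of_ae_le (hPjQbar j) ((hcond j).2.add (integrable_const _)) (hB_le j)
  have hBj_le : ∀ j, ∫ x, llr (P j) Qbar x ∂(P j)
      ≤ ∫ x, llr (P j) (Qs (κ j)) x ∂(P j) + Real.log Q := fun j => by
    haveI := hP j
    have hadd : ∫ x, (llr (P j) (Qs (κ j)) x + Real.log Q) ∂(P j)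
        = ∫ x, llr (P j) (Qs (κ j)) x ∂(P j) + Real.log Q := by
      rw [integral_add (hcond j).2 (integrable_const _), integral_const, probReal_univ,
        one_smul]
    exact (integral_mono_ae (hintB j) ((hcond j).2.add (integrable_const _))
      (hB_le j)).trans_eq hadd
  -- Step A: chain rule through Pbar
  have hchainA : ∀ j, llr (P j) Qbar =ᵐ[P j]
      fun x => llr (P j) Pbar x + llr Pbar Qbar x := fun j => by
    haveI := hP j
    exact llr_chain (hPjPbar j) hPbarQbarAC
  have hintD : ∀ j, Integrable (llr Pbar Qbar) (P j) := fun j => by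
    refine ((hintB j).sub (hintA j)).congr ?_
    filter_upwards [hchainA j] with x hx
    simp only [Pi.sub_apply]
    rw [hx]; ring
  have hBD : ∀ j, ∫ x, llr (P j) Qbar x ∂(P j)
      = ∫ x, llr (P j) Pbar x ∂(P j) + ∫ x, llr Pbar Qbar x ∂(P j) := fun j => by
    rw [integral_congr_ae (hchainA j), integral_add (hintA j) (hintD j)]
  -- Gibbs on Pbar
  have hintPbar : Integrable (llr Pbar Qbar) Pbar := by
    rw [hPbar]
    exact (integrable_finset_sum_measure.2 fun j _ => hintD j).smul_measure
      (ENNReal.inv_ne_top.2 hM0)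
  have hGibbs : 0 ≤ ∫ x, llr Pbar Qbar x ∂Pbar :=
    integral_llr_nonneg hPbarQbarAC hintPbar
  have hsumD : 0 ≤ ∑ j, ∫ x, llr Pbar Qbar x ∂(P j) := by
    have h1 : ∫ x, llr Pbar Qbar x ∂Pbar
        = ((M : ℝ≥0∞)⁻¹).toReal * ∑ j, ∫ x, llr Pbar Qbar x ∂(P j) := by
      rw [hPbar, integral_smul_measure, integral_finset_sum_measure fun j _ => hintD j,
        smul_eq_mul]
    have hMpos : 0 < ((M : ℝ≥0∞)⁻¹).toReal :=
      ENNReal.toReal_pos (ENNReal.inv_ne_zero.2 hMtop) (ENNReal.inv_ne_top.2 hM0)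
    rw [h1] at hGibbs
    exact (mul_nonneg_iff_of_pos_left hMpos).1 hGibbs
  -- real-valued inequality for sums
  have hsumA_le : ∑ j, ∫ x, llr (P j) Pbar x ∂(P j)
      ≤ ∑ j, (∫ x, llr (P j) (Qs (κ j)) x ∂(P j) + Real.log Q) := by
    have h1 : ∑ j, ∫ x, llr (P j) Pbar x ∂(P j) + ∑ j, ∫ x, llr Pbar Qbar x ∂(P j)
        = ∑ j, ∫ x, llr (P j) Qbar x ∂(P j) := by
      rw [← Finset.sum_add_distrib]
      exact Finset.sum_congr rfl fun j _ => (hBD j).symm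
    have h2 : ∑ j, ∫ x, llr (P j) Qbar x ∂(P j)
        ≤ ∑ j, (∫ x, llr (P j) (Qs (κ j)) x ∂(P j) + Real.log Q) :=
      Finset.sum_le_sum fun j _ => hBj_le j
    linarith
  -- assemble in ℝ≥0∞
  have hbig : ∑ j, klDiv (P j) Pbar
      ≤ ∑ j, (⨅ k, klDiv (P j) (Qs k)) + (M : ℝ≥0∞) * ENNReal.ofReal (Real.log Q) := by
    calc ∑ j, klDiv (P j) Pbar
        = ENNReal.ofReal (∑ j, ∫ x, llr (P j) Pbar x ∂(P j)) := by
          rw [ENNReal.ofReal_sum_of_nonneg fun j _ => hA_nonneg j]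
          exact Finset.sum_congr rfl fun j _ => hklA j
      _ ≤ ENNReal.ofReal (∑ j, (∫ x, llr (P j) (Qs (κ j)) x ∂(P j) + Real.log Q)) :=
          ENNReal.ofReal_le_ofReal hsumA_le
      _ ≤ ∑ j, ENNReal.ofReal (∫ x, llr (P j) (Qs (κ j)) x ∂(P j) + Real.log Q) :=
          ofReal_sum_le _ _
      _ ≤ ∑ j, (ENNReal.ofReal (∫ x, llr (P j) (Qs (κ j)) x ∂(P j))
            + ENNReal.ofReal (Real.log Q)) :=
          Finset.sum_le_sum fun j _ => ENNReal.ofReal_add_le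
      _ = ∑ j, (⨅ k, klDiv (P j) (Qs k)) + (M : ℝ≥0∞) * ENNReal.ofReal (Real.log Q) := by
          rw [Finset.sum_add_distrib, Finset.sum_const, Finset.card_univ, Fintype.card_fin,
            nsmul_eq_mul]
          congr 1
          exact Finset.sum_congr rfl fun j _ => by rw [← hklK j, hκ j]
  calc (M : ℝ≥0∞)⁻¹ * ∑ j, klDiv (P j) Pbar
      ≤ (M : ℝ≥0∞)⁻¹ * (∑ j, (⨅ k, klDiv (P j) (Qs k))
          + (M : ℝ≥0∞) * ENNReal.ofReal (Real.log Q)) := mul_le_mul_right hbig _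
    _ = ENNReal.ofReal (Real.log Q) + (M : ℝ≥0∞)⁻¹ * ∑ j, ⨅ k, klDiv (P j) (Qs k) := by
        rw [mul_add, ← mul_assoc, ENNReal.inv_mul_cancel hM0 hMtop, one_mul, add_comm]
end
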